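/- Let {(U_n,V_n) : n ∈ ℕ} be a family of pairs of transverse subsets of ℝ² such that for every n, U_n ∩ 𝔻_n(0) = ℍ₂ ∩ 𝔻_n(0) and V_n ∩ 𝔻_n(0) = ℍ₁ ∩ 𝔻_n(0), where 𝔻_n(0) = {x ∈ ℝ² : d₁(x,0) < n}. Let P be a self-adjoint projection on ℓ²(ℤ²,ℂᵐ) whose kernel is PSR. Then for every x ∈ ℤ², the matrices K_{U_n,V_n}(P)(x,x) converge, as n → ∞, to K_{ℍ₂,ℍ₁}(P)(x,x). -/

import Mathlib

noncomputable section

/-- The lattice ℤ². -/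
abbrev Z2 := ℤ × ℤ
/-- The plane ℝ². -/
abbrev R2 := ℝ × ℝ

/-- The ℓ¹ distance on the plane. -/
def d1 (x y : R2) : ℝ := |x.1 - y.1| + |x.2 - y.2|

/-- The ℓ¹ distance from a point to a set. -/
def d1S (x : R2) (S : Set R2) : ℝ := sInf (d1 x '' S)

/-- The logarithmic distance on the plane: d_l(x,y) = ln(1 + d₁(x,y)). -/
def dl (x y : R2) : ℝ := Real.log (1 + d1 x y)

/-- The logarithmic distance from a point to a set. -/
def dlS (x : R2) (S : Set R2) : ℝ := Real.log (1 + d1S x S)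

/-- The Euclidean norm on the plane. -/
def eunorm (x : R2) : ℝ := Real.sqrt (x.1 ^ 2 + x.2 ^ 2)

/-- The Euclidean distance on the plane. -/
def eudist (x y : R2) : ℝ := eunorm (x - y)

/-- The embedding of ℤ² into ℝ². -/
def emb (x : Z2) : R2 := ((x.1 : ℝ), (x.2 : ℝ))

/-- Ψ_{U,V}(x) = 1 + d₁(x,∂U) + d₁(x,∂V). -/
def Psi (U V : Set R2) (x : R2) : ℝ := 1 + d1S x (frontier U) + d1S x (frontier V)

/-- U and V are transverse: for some c ∈ (0,1), Ψ_{U,V}(x) ≥ |x|ᶜ whenever |x| ≥ 1/c. -/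
def Transverse (U V : Set R2) : Prop :=
  ∃ c : ℝ, 0 < c ∧ c < 1 ∧ ∀ x : R2, 1 / c ≤ eunorm x → eunorm x ^ c ≤ Psi U V x

/-- The operator norm of an m×m complex matrix. -/
def matNorm {m : ℕ} (M : Matrix (Fin m) (Fin m) ℂ) : ℝ :=
  ‖Matrix.toEuclideanCLM (𝕜 := ℂ) M‖

/-- The real-valued indicator function of a subset of the plane. -/
def indR (W : Set R2) (z : R2) : ℝ := Set.indicator W (fun _ => (1:ℝ)) z

/-- The Hilbert space ℓ²(ℤ²,ℂᵐ). -/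
abbrev Hsp (m : ℕ) := lp (fun _ : Z2 => EuclideanSpace ℂ (Fin m)) 2

/-- The kernel of a bounded operator on ℓ²(ℤ²,ℂᵐ): the m×m matrix with entries
⟨δ_x eᵢ, A δ_y eⱼ⟩. -/
def opKer {m : ℕ} (A : Hsp m →L[ℂ] Hsp m) (x y : Z2) : Matrix (Fin m) (Fin m) ℂ :=
  Matrix.of fun i j =>
    (inner ℂ (lp.single 2 x (EuclideanSpace.single i (1:ℂ)))
      (A (lp.single 2 y (EuclideanSpace.single j (1:ℂ)))) : ℂ)

/-- A is exponentially-short-range (ESR) with constant ν. -/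
def IsESR {m : ℕ} (ν : ℝ) (A : Hsp m →L[ℂ] Hsp m) : Prop :=
  ∀ x y : Z2, matNorm (opKer A x y) ≤ ν⁻¹ * Real.exp (-2 * ν * d1 (emb x) (emb y))

/-- A is polynomially-short-range (PSR). -/
def IsPSR {m : ℕ} (A : Hsp m →L[ℂ] Hsp m) : Prop :=
  ∀ N : ℝ, 0 < N → ∃ C : ℝ, 0 < C ∧ ∀ x y : Z2,
    matNorm (opKer A x y) ≤ C * (1 + d1 (emb x) (emb y)) ^ (-N)

lemma indic_memℓp {m : ℕ} (W : Set R2) (ψ : Hsp m) :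
    Memℓp ((emb ⁻¹' W).indicator (fun x : Z2 => ψ x)) 2 := by
  apply memℓp_gen
  refine Summable.of_nonneg_of_le (fun x => Real.rpow_nonneg (norm_nonneg _) _)
    (fun x => ?_) ((lp.memℓp ψ).summable (by norm_num))
  exact Real.rpow_le_rpow (norm_nonneg _) (norm_indicator_le_norm_self _ _) (by norm_num)

/-- The multiplication operator by the indicator function of W ⊆ ℝ², acting on ℓ²(ℤ²,ℂᵐ). -/
def indicOp (m : ℕ) (W : Set R2) : Hsp m →L[ℂ] Hsp m :=
  LinearMap.mkContinuous
    { toFun := fun ψ => (⟨(emb ⁻¹' W).indicator (fun x : Z2 => ψ x), indic_memℓp W ψ⟩ : Hsp m)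
      map_add' := by
        intro ψ φ
        apply lp.ext
        funext x
        by_cases h : x ∈ emb ⁻¹' W <;>
          simp [Set.indicator_of_mem, Set.indicator_of_notMem, h, lp.coeFn_add] <;> erw [Pi.add_apply] <;> simp [h]
      map_smul' := by
        intro c ψ
        apply lp.ext
        funext x
        by_cases h : x ∈ emb ⁻¹' W <;>
          simp [Set.indicator_of_mem, Set.indicator_of_notMem, h, lp.coeFn_smul] }
    1
    (by
      intro ψ
      rw [one_mul]
      refine lp.norm_le_of_tsum_le (by norm_num) (norm_nonneg ψ) ?_
      rw [lp.norm_rpow_eq_tsum (by norm_num) ψ]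
      refine Summable.tsum_le_tsum (fun x => ?_) ((lp.memℓp _).summable (by norm_num))
        ((lp.memℓp ψ).summable (by norm_num))
      exact Real.rpow_le_rpow (norm_nonneg _) (norm_indicator_le_norm_self _ _) (by norm_num))

/-- The commutator of two operators. -/
def commOp {m : ℕ} (A B : Hsp m →L[ℂ] Hsp m) : Hsp m →L[ℂ] Hsp m := A * B - B * A

/-- K_{U,V}(P) = P[[P,1_U],[P,1_V]]. -/
def Kop {m : ℕ} (P : Hsp m →L[ℂ] Hsp m) (U V : Set R2) : Hsp m →L[ℂ] Hsp m :=
  P * commOp (commOp P (indicOp m U)) (commOp P (indicOp m V))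

/-- Absolute convergence of the sum defining the geometric bulk conductance σ_b^{U,V}(P). -/
def bulkSummable {m : ℕ} (P : Hsp m →L[ℂ] Hsp m) (U V : Set R2) : Prop :=
  Summable fun x : Z2 => ‖(opKer (Kop P U V) x x).trace‖

/-- The geometric bulk conductance σ_b^{U,V}(P) = −i Σ_x tr K_{U,V}(P)(x,x). -/
def sigmaB {m : ℕ} (P : Hsp m →L[ℂ] Hsp m) (U V : Set R2) : ℂ :=
  (-Complex.I) * ∑' x : Z2, (opKer (Kop P U V) x x).trace

/-- The right half-plane ℍ₁. -/
def H1 : Set R2 := {x | 0 < x.1}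
/-- The upper half-plane ℍ₂. -/
def H2 : Set R2 := {x | 0 < x.2}

/-- Absolute convergence of the sum defining the Hall conductance. -/
def hallSummable {m : ℕ} (P : Hsp m →L[ℂ] Hsp m) : Prop := bulkSummable P H2 H1

/-- The Hall conductance σ_b(P) = σ_b^{ℍ₂,ℍ₁}(P). -/
def sigmaHall {m : ℕ} (P : Hsp m →L[ℂ] Hsp m) : ℂ := sigmaB P H2 H1

/-- H_e is an edge operator associated to H₊, H₋ in U, U^c, with constant ν. -/
def IsEdgeOp {m : ℕ} (ν : ℝ) (Hp Hm He : Hsp m →L[ℂ] Hsp m) (U : Set R2) : Prop :=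
  IsSelfAdjoint He ∧
  ∀ x y : Z2,
    matNorm (opKer (He - indicOp m U * Hp * indicOp m U
      - indicOp m Uᶜ * Hm * indicOp m Uᶜ) x y)
    ≤ ν⁻¹ * Real.exp (-2 * ν * d1S (emb x) (frontier U))

/-- ρ ∈ C^∞(ℝ;[0,1]) with ρ = 0 on (−∞,a] and ρ = 1 on [b,∞). -/
def IsSwitch (a b : ℝ) (ρ : ℝ → ℝ) : Prop :=
  ContDiff ℝ (⊤ : ℕ∞) ρ ∧ (∀ x, ρ x ∈ Set.Icc (0:ℝ) 1) ∧
  (∀ x ≤ a, ρ x = 0) ∧ (∀ x ≥ b, ρ x = 1)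

/-- f : ℝ → ℝ continuous, equal to 1 on (−∞,a] and to 0 on [b,∞); f(H) is then the
spectral projection of H below the gap (a,b). -/
def IsBelowCut (a b : ℝ) (f : ℝ → ℝ) : Prop :=
  Continuous f ∧ (∀ x ≤ a, f x = 1) ∧ (∀ x ≥ b, f x = 0)

/-- Absolute convergence of the sum defining the edge conductance. -/
def edgeSummable {m : ℕ} (He : Hsp m →L[ℂ] Hsp m) (ρ : ℝ → ℝ) (V : Set R2) : Prop :=
  Summable fun x : Z2 =>
    ‖(opKer (cfc (instCFC := IsSelfAdjoint.instContinuousFunctionalCalculus) (deriv ρ) He * commOp He (indicOp m V)) x x).trace‖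

/-- The edge conductance σ_e^{U,V}(H_e) = i Σ_x tr (ρ'(H_e)[H_e,1_V])(x,x). -/
def sigmaE {m : ℕ} (He : Hsp m →L[ℂ] Hsp m) (ρ : ℝ → ℝ) (V : Set R2) : ℂ :=
  Complex.I * ∑' x : Z2, (opKer (cfc (instCFC := IsSelfAdjoint.instContinuousFunctionalCalculus) (deriv ρ) He * commOp He (indicOp m V)) x x).trace

/-! The indicators `1_{U_n}` converge strongly to `1_{ℍ₂}` because they agree on ever larger
disks: this is dominated convergence in `ℓ²`. Strong convergence is preserved by products,
since a strongly convergent sequence of operators on a Banach space is uniformly bounded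
(Banach–Steinhaus). Hence `K_{U_n,V_n}(P) → K_{ℍ₂,ℍ₁}(P)` strongly, and the kernel entries
are matrix coefficients of these operators. -/

open Filter Topology
open scoped ENNReal

section StrongConvergence

variable {𝕜 E F : Type*} [NontriviallyNormedField 𝕜]
  [NormedAddCommGroup E] [NormedSpace 𝕜 E] [NormedAddCommGroup F] [NormedSpace 𝕜 F]

theorem ContinuousLinearMap.tendsto_apply_of_tendsto_apply [CompleteSpace E]
    {A : ℕ → E →L[𝕜] F} {A₀ : E →L[𝕜] F} {v : ℕ → E} {v₀ : E}
    (hA : ∀ ξ, Tendsto (fun n => A n ξ) atTop (𝓝 (A₀ ξ))) (hv : Tendsto v atTop (𝓝 v₀)) :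
    Tendsto (fun n => A n (v n)) atTop (𝓝 (A₀ v₀)) := by
  obtain ⟨C, hC⟩ : ∃ C, ∀ n, ‖A n‖ ≤ C := banach_steinhaus fun ξ => by
    obtain ⟨C, hC⟩ := (Metric.isBounded_range_of_tendsto _ (hA ξ)).exists_norm_le
    exact ⟨C, fun n => hC _ ⟨n, rfl⟩⟩
  have hsmall : Tendsto (fun n => A n (v n - v₀)) atTop (𝓝 0) := by
    refine squeeze_zero_norm (fun n => (A n).le_of_opNorm_le (hC n) _) ?_
    simpa using (tendsto_sub_nhds_zero_iff.mpr hv).norm.const_mul C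
  simpa using hsmall.add (hA v₀)

theorem ContinuousLinearMap.tendsto_mul_apply [CompleteSpace E] {A B : ℕ → E →L[𝕜] E}
    {A₀ B₀ : E →L[𝕜] E} (hA : ∀ ξ, Tendsto (fun n => A n ξ) atTop (𝓝 (A₀ ξ)))
    (hB : ∀ ξ, Tendsto (fun n => B n ξ) atTop (𝓝 (B₀ ξ))) (ξ : E) :
    Tendsto (fun n => (A n * B n) ξ) atTop (𝓝 ((A₀ * B₀) ξ)) :=
  tendsto_apply_of_tendsto_apply (A := A) (A₀ := A₀) hA (hB ξ)

end StrongConvergence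

section DominatedConvergence

variable {ι : Type*} {E : ι → Type*} [∀ i, NormedAddCommGroup (E i)]
  {p : ℝ≥0∞} [Fact (1 ≤ p)]

theorem lp.tendsto_zero_of_tendsto_apply_of_norm_le (hp : p ≠ ∞) {f : ℕ → lp E p} (g : lp E p)
    (hlim : ∀ i, Tendsto (fun n => f n i) atTop (𝓝 0)) (hbound : ∀ n i, ‖f n i‖ ≤ ‖g i‖) :
    Tendsto f atTop (𝓝 0) := by
  have hp₀ : 0 < p.toReal := ENNReal.toReal_pos (zero_lt_one.trans_le Fact.out).ne' hp
  have hrpow : Tendsto (fun n => ‖f n‖ ^ p.toReal) atTop (𝓝 0) := by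
    simp_rw [lp.norm_rpow_eq_tsum hp₀]
    have := tendsto_tsum_of_dominated_convergence ((lp.memℓp g).summable hp₀)
      (fun i => ((hlim i).norm.rpow_const (Or.inr hp₀.le)))
      (Eventually.of_forall fun n i => by
        rw [Real.norm_of_nonneg (by positivity)]
        exact Real.rpow_le_rpow (norm_nonneg _) (hbound n i) hp₀.le)
    simpa [Real.zero_rpow hp₀.ne'] using this
  rw [tendsto_zero_iff_norm_tendsto_zero]
  have := hrpow.rpow_const (p := p.toReal⁻¹) (Or.inr (inv_nonneg.mpr hp₀.le))
  simpa [← Real.rpow_mul (norm_nonneg _), mul_inv_cancel₀ hp₀.ne',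
    Real.zero_rpow (inv_ne_zero hp₀.ne')] using this

end DominatedConvergence


theorem indicOp_apply {m : ℕ} (W : Set R2) (ξ : Hsp m) (z : Z2) :
    indicOp m W ξ z = (emb ⁻¹' W).indicator (fun x : Z2 => ξ x) z :=
  rfl

theorem tendsto_indicOp_apply {m : ℕ} {W : ℕ → Set R2} {W₀ : Set R2}
    (hW : ∀ z : Z2, ∀ᶠ n in atTop, (emb z ∈ W n ↔ emb z ∈ W₀)) (ξ : Hsp m) :
    Tendsto (fun n => indicOp m (W n) ξ) atTop (𝓝 (indicOp m W₀ ξ)) := by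
  rw [← tendsto_sub_nhds_zero_iff]
  refine lp.tendsto_zero_of_tendsto_apply_of_norm_le ENNReal.ofNat_ne_top ξ (fun z => ?_)
    (fun n z => ?_)
  · refine tendsto_const_nhds.congr' ?_
    filter_upwards [hW z] with n hn
    by_cases hz : emb z ∈ W₀ <;> simp [indicOp_apply, hn, hz]
  · by_cases h₁ : emb z ∈ W n <;> by_cases h₂ : emb z ∈ W₀ <;> simp [indicOp_apply, h₁, h₂]

theorem eventually_mem_iff_of_inter_disk_eq {W : ℕ → Set R2} {W₀ : Set R2}
    (hW : ∀ n : ℕ, W n ∩ {x : R2 | d1 x (0, 0) < n} = W₀ ∩ {x : R2 | d1 x (0, 0) < n})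
    (x : R2) : ∀ᶠ n in atTop, (x ∈ W n ↔ x ∈ W₀) := by
  obtain ⟨N, hN⟩ := exists_nat_gt (d1 x (0, 0))
  filter_upwards [eventually_ge_atTop N] with n hn
  have hx : d1 x (0, 0) < n := hN.trans_le (Nat.cast_le.mpr hn)
  simpa [hx] using Set.ext_iff.mp (hW n) x

section Kernels

variable {m : ℕ}

theorem tendsto_commOp_apply {A B : ℕ → Hsp m →L[ℂ] Hsp m} {A₀ B₀ : Hsp m →L[ℂ] Hsp m}
    (hA : ∀ ξ, Tendsto (fun n => A n ξ) atTop (𝓝 (A₀ ξ)))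
    (hB : ∀ ξ, Tendsto (fun n => B n ξ) atTop (𝓝 (B₀ ξ))) (ξ : Hsp m) :
    Tendsto (fun n => commOp (A n) (B n) ξ) atTop (𝓝 (commOp A₀ B₀ ξ)) :=
  (ContinuousLinearMap.tendsto_mul_apply hA hB ξ).sub
    (ContinuousLinearMap.tendsto_mul_apply hB hA ξ)

theorem tendsto_Kop_apply (P : Hsp m →L[ℂ] Hsp m) {U V : ℕ → Set R2} {U₀ V₀ : Set R2}
    (hU : ∀ ξ, Tendsto (fun n => indicOp m (U n) ξ) atTop (𝓝 (indicOp m U₀ ξ)))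
    (hV : ∀ ξ, Tendsto (fun n => indicOp m (V n) ξ) atTop (𝓝 (indicOp m V₀ ξ))) (ξ : Hsp m) :
    Tendsto (fun n => Kop P (U n) (V n) ξ) atTop (𝓝 (Kop P U₀ V₀ ξ)) :=
  have hP : ∀ ξ, Tendsto (fun _ : ℕ => P ξ) atTop (𝓝 (P ξ)) := fun _ => tendsto_const_nhds
  ContinuousLinearMap.tendsto_mul_apply hP
    (tendsto_commOp_apply (tendsto_commOp_apply hP hU) (tendsto_commOp_apply hP hV)) ξ

theorem tendsto_opKer {A : ℕ → Hsp m →L[ℂ] Hsp m} {A₀ : Hsp m →L[ℂ] Hsp m}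
    (hA : ∀ ξ, Tendsto (fun n => A n ξ) atTop (𝓝 (A₀ ξ))) (x y : Z2) :
    Tendsto (fun n => opKer (A n) x y) atTop (𝓝 (opKer A₀ x y)) :=
  tendsto_pi_nhds.mpr fun _ => tendsto_pi_nhds.mpr fun _ => tendsto_const_nhds.inner (hA _)

end Kernels

theorem bulk_kernel_local_convergence
    (m : ℕ)
    (P : Hsp m →L[ℂ] Hsp m)
    (Useq Vseq : ℕ → Set R2)
    (hU : ∀ n : ℕ, Useq n ∩ {x : R2 | d1 x (0, 0) < (n : ℝ)} = H2 ∩ {x : R2 | d1 x (0, 0) < (n : ℝ)})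
    (hV : ∀ n : ℕ, Vseq n ∩ {x : R2 | d1 x (0, 0) < (n : ℝ)} = H1 ∩ {x : R2 | d1 x (0, 0) < (n : ℝ)})
    (x : Z2) :
    Filter.Tendsto (fun n : ℕ => opKer (Kop P (Useq n) (Vseq n)) x x)
      Filter.atTop (nhds (opKer (Kop P H2 H1) x x)) :=
  tendsto_opKer (tendsto_Kop_apply P
    (tendsto_indicOp_apply fun z => eventually_mem_iff_of_inter_disk_eq hU (emb z))
    (tendsto_indicOp_apply fun z => eventually_mem_iff_of_inter_disk_eq hV (emb z))) x x

end
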